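/- arXiv:1901.08572 — 2 statements merged into one kernel-verified Lean document; each statement's English description precedes it below -/
import Mathlib

section
/- For every constant K ≥ 1 there exists a constant C = C(K) > 0 with the following property. Let W_1(0), …, W_L(0) be weight matrices of a depth-L width-m linear network satisfying ‖W_{b:a}(0)‖ ≤ K·√L·m^{(b−a+1)/2} for all 1 < a ≤ b < L. Let R > 0, let Δ_1, …, Δ_L be matrices of matching shapes with ‖Δ_i‖_F ≤ R for every i, and set W_i = W_i(0) + Δ_i. If m ≥ C·L³·R², then for all 1 < i ≤ j < L, ‖W_{j:i} − W_{j:i}(0)‖ ≤ 0.05·√L·m^{(j−i+1)/2}. -/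
/-!
Write `A_k = W_k(0) + Δ_k`. The noncommutative telescoping identity
`A_{j:i} - W_{j:i}(0) = ∑_{i ≤ t ≤ j} W_{j:t+1}(0) (A_t - W_t(0)) A_{t-1:i}` bounds the perturbation
by three kinds of factors: `W_{j:t+1}(0)` is controlled by hypothesis, `‖Δ_t‖ ≤ ‖Δ_t‖_F ≤ R`, and,
by induction on `j - i`, `‖A_{t-1:i}‖ ≤ (K + 0.05) √L m^{(t-i)/2}`. Each of the at most `L` terms is
then at most `K (K + 0.05) L R m^{(j-i)/2}`, and `m ≥ (20 K (K + 0.05))² L³ R²` makes the sum at most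
`0.05 √L m^{(j-i+1)/2}`. Only submultiplicativity and the triangle inequality enter, so the induction
runs in any normed ring, here matrices with the `L²` operator norm.
-/

open MeasureTheory ProbabilityTheory Matrix
open scoped BigOperators ENNReal

noncomputable section

/-- `W_j * W_{j-1} * ⋯ * W_i` for a family of square matrices (identity if `j < i`). -/
def midProd {m : ℕ} (W : ℕ → Matrix (Fin m) (Fin m) ℝ) (i j : ℕ) :
    Matrix (Fin m) (Fin m) ℝ :=
  (((List.range' i (j + 1 - i)).reverse).map W).prod

/-- Euclidean norm of a vector. -/
def enorm' {a : ℕ} (v : Fin a → ℝ) : ℝ := Real.sqrt (∑ i, v i ^ 2)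

/-- Largest singular value (spectral norm): supremum of `‖A v‖` over unit vectors `v`. -/
def smax {a b : ℕ} (A : Matrix (Fin a) (Fin b) ℝ) : ℝ :=
  ⨆ v : {v : Fin b → ℝ // ∑ j, v j ^ 2 = 1}, enorm' (A.mulVec v.1)

/-- Smallest singular value: infimum of `‖A v‖` over unit vectors `v`. -/
def smin {a b : ℕ} (A : Matrix (Fin a) (Fin b) ℝ) : ℝ :=
  ⨅ v : {v : Fin b → ℝ // ∑ j, v j ^ 2 = 1}, enorm' (A.mulVec v.1)

/-- Squared Frobenius norm of a matrix. -/
def frobSq {a b : ℕ} (A : Matrix (Fin a) (Fin b) ℝ) : ℝ := ∑ i, ∑ j, A i j ^ 2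

/-- Frobenius norm of a matrix. -/
def frob {a b : ℕ} (A : Matrix (Fin a) (Fin b) ℝ) : ℝ := Real.sqrt (frobSq A)

/-- Index type for all the entries of the weight matrices
`W_1 ∈ ℝ^{m×din}`, `W_2, …, W_{L-1} ∈ ℝ^{m×m}`, `W_L ∈ ℝ^{dout×m}`. -/
def InitIdx (L m din dout : ℕ) : Type :=
  (Fin m × Fin din) ⊕ (({k : ℕ // 2 ≤ k ∧ k ≤ L - 1}) × (Fin m × Fin m)) ⊕ (Fin dout × Fin m)

/-- The family of all entries of the weight matrices. -/
def initEntry {Ω : Type*} (L m din dout : ℕ)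
    (W1 : Ω → Matrix (Fin m) (Fin din) ℝ)
    (Wmid : ℕ → Ω → Matrix (Fin m) (Fin m) ℝ)
    (WL : Ω → Matrix (Fin dout) (Fin m) ℝ) :
    InitIdx L m din dout → Ω → ℝ :=
  fun idx ω =>
    match idx with
    | Sum.inl p => W1 ω p.1 p.2
    | Sum.inr (Sum.inl p) => Wmid p.1.1 ω p.2.1 p.2.2
    | Sum.inr (Sum.inr p) => WL ω p.1 p.2

section Monoid
variable {M : Type*} [Monoid M]

def descProd (W : ℕ → M) (i : ℕ) : ℕ → M
  | 0 => 1
  | n + 1 => W (i + n) * descProd W i n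

@[simp] lemma descProd_zero (W : ℕ → M) (i : ℕ) : descProd W i 0 = 1 := rfl

lemma descProd_succ (W : ℕ → M) (i n : ℕ) :
    descProd W i (n + 1) = W (i + n) * descProd W i n := rfl

lemma prod_map_reverse_range' (W : ℕ → M) (i n : ℕ) :
    ((List.range' i n).reverse.map W).prod = descProd W i n := by
  induction n with
  | zero => rfl
  | succ n ih => simp [List.range'_concat, List.map_reverse, ← ih, descProd_succ]

end Monoid

lemma midProd_eq_descProd {m : ℕ} (W : ℕ → Matrix (Fin m) (Fin m) ℝ) (i j : ℕ) :
    midProd W i j = descProd W i (j + 1 - i) :=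
  prod_map_reverse_range' W i _

section Ring
variable {R : Type*} [Ring R]

theorem descProd_sub_descProd (A B : ℕ → R) (i n : ℕ) :
    descProd A i n - descProd B i n =
      ∑ t ∈ Finset.range n, descProd B (i + t + 1) (n - 1 - t) * (A (i + t) - B (i + t)) *
        descProd A i t := by
  induction n with
  | zero => simp
  | succ n ih =>
    have hsum : ∑ t ∈ Finset.range n, descProd B (i + t + 1) (n + 1 - 1 - t) *
          (A (i + t) - B (i + t)) * descProd A i t =
        B (i + n) * (descProd A i n - descProd B i n) := by
      rw [ih, Finset.mul_sum]
      refine Finset.sum_congr rfl fun t ht => ?_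
      have ht : t < n := Finset.mem_range.mp ht
      rw [show n + 1 - 1 - t = n - 1 - t + 1 by omega, descProd_succ,
        show i + t + 1 + (n - 1 - t) = i + n by omega]
      simp only [mul_assoc]
    rw [Finset.sum_range_succ, hsum, Nat.add_sub_cancel, Nat.sub_self, descProd_zero,
      descProd_succ, descProd_succ]
    noncomm_ring

end Ring

section NormedRing
variable {R : Type*} [NormedRing R] {A B : ℕ → R} {i N : ℕ} {c ε r s : ℝ}

theorem norm_descProd_sub_descProd_le
    (hB : ∀ a n, i ≤ a → a + n ≤ i + N → ‖descProd B a n‖ ≤ c * s ^ n)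
    (hAB : ∀ k, i ≤ k → k < i + N → ‖A k - B k‖ ≤ r)
    (hs : 0 ≤ s) (hε : 0 ≤ ε) (hsmall : N * (c * (c + ε) * r) ≤ ε * s) :
    ∀ n ≤ N, ‖descProd A i n - descProd B i n‖ ≤ ε * s ^ n := by
  intro n
  induction n using Nat.strong_induction_on with
  | _ n ih =>
  intro hn
  rcases n with _ | n
  · simpa using hε
  have hc : 0 ≤ c := by simpa using (norm_nonneg _).trans (hB i 0 le_rfl (by omega))
  have hr : 0 ≤ r := (norm_nonneg _).trans (hAB i le_rfl (by omega))
  have hA : ∀ t ≤ n, ‖descProd A i t‖ ≤ (c + ε) * s ^ t := fun t ht =>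
    calc ‖descProd A i t‖ ≤ ‖descProd B i t‖ + ‖descProd A i t - descProd B i t‖ :=
          norm_le_norm_add_norm_sub' _ _
      _ ≤ c * s ^ t + ε * s ^ t :=
          add_le_add (hB i t le_rfl (by omega)) (ih t (by omega) (by omega))
      _ = (c + ε) * s ^ t := by ring
  have hterm : ∀ t ∈ Finset.range (n + 1), ‖descProd B (i + t + 1) (n - t) *
      (A (i + t) - B (i + t)) * descProd A i t‖ ≤ c * (c + ε) * r * s ^ n := by
    intro t ht
    have ht : t ≤ n := Nat.lt_succ_iff.mp (Finset.mem_range.mp ht)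
    calc _ ≤ ‖descProd B (i + t + 1) (n - t)‖ * ‖A (i + t) - B (i + t)‖ * ‖descProd A i t‖ :=
          norm_mul₃_le
      _ ≤ c * s ^ (n - t) * r * ((c + ε) * s ^ t) := by
          have hBt := hB (i + t + 1) (n - t) (by omega) (by omega)
          have hABt := hAB (i + t) (by omega) (by omega)
          gcongr
          exact hA t ht
      _ = c * (c + ε) * r * s ^ n := by rw [← pow_sub_mul_pow s ht]; ring
  calc ‖descProd A i (n + 1) - descProd B i (n + 1)‖
      ≤ ∑ t ∈ Finset.range (n + 1), c * (c + ε) * r * s ^ n := by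
        rw [descProd_sub_descProd]
        simp only [Nat.add_sub_cancel]
        exact (norm_sum_le _ _).trans (Finset.sum_le_sum hterm)
    _ = (n + 1) * (c * (c + ε) * r) * s ^ n := by
        rw [Finset.sum_const, Finset.card_range, nsmul_eq_mul]
        push_cast
        ring
    _ ≤ N * (c * (c + ε) * r) * s ^ n := by gcongr; exact_mod_cast hn
    _ ≤ ε * s * s ^ n := by gcongr
    _ = ε * s ^ (n + 1) := by ring

end NormedRing

section L2OpNorm
open scoped Matrix.Norms.L2Operator
variable {a b : ℕ}

lemma enorm'_eq_norm (v : Fin a → ℝ) : enorm' v = ‖WithLp.toLp 2 v‖ := by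
  simp [enorm', EuclideanSpace.norm_eq, sq_abs]

lemma enorm'_mulVec_le_frob (A : Matrix (Fin a) (Fin b) ℝ) (v : Fin b → ℝ) :
    enorm' (A *ᵥ v) ≤ frob A * enorm' v := by
  have h : ∑ i, (A *ᵥ v) i ^ 2 ≤ frobSq A * ∑ j, v j ^ 2 := by
    rw [frobSq, Finset.sum_mul]
    refine Finset.sum_le_sum fun i _ => ?_
    simpa [Matrix.mulVec, dotProduct] using
      Finset.sum_mul_sq_le_sq_mul_sq Finset.univ (fun j => A i j) v
  calc enorm' (A *ᵥ v) ≤ √(frobSq A * ∑ j, v j ^ 2) := Real.sqrt_le_sqrt h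
    _ = frob A * enorm' v := by
      rw [Real.sqrt_mul (by unfold frobSq; positivity), frob, enorm']

lemma smax_eq_l2_opNorm (A : Matrix (Fin a) (Fin b) ℝ) : smax A = ‖A‖ := by
  rw [l2_opNorm_def, ← ContinuousLinearMap.sSup_sphere_eq_norm, smax, ← sSup_range]
  congr 1
  ext t
  simp only [enorm'_eq_norm, EuclideanSpace.norm_eq, Real.norm_eq_abs, sq_abs, Set.mem_range,
    Subtype.exists, exists_prop, LinearEquiv.trans_apply, LinearMap.coe_toContinuousLinearMap',
    ofLp_toLpLin, toLin'_apply, Set.mem_image, mem_sphere_iff_norm, sub_zero, Real.sqrt_eq_one]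
  exact ⟨fun ⟨v, h⟩ => ⟨WithLp.toLp 2 v, h⟩, fun ⟨x, h⟩ => ⟨x.ofLp, h⟩⟩

lemma l2_opNorm_le_frob (A : Matrix (Fin a) (Fin b) ℝ) : ‖A‖ ≤ frob A := by
  rw [l2_opNorm_def]
  refine ContinuousLinearMap.opNorm_le_bound _ (Real.sqrt_nonneg _) fun x => ?_
  simpa [enorm'_eq_norm, toLpLin_apply] using enorm'_mulVec_le_frob A x.ofLp

lemma l2_opNorm_one (ha : 0 < a) : ‖(1 : Matrix (Fin a) (Fin a) ℝ)‖ = 1 := by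
  have : Nonempty (Fin a) := ⟨⟨0, ha⟩⟩
  rw [← diagonal_one, l2_opNorm_diagonal]
  exact norm_one

theorem smax_midProd_add_sub_midProd_le {m L i : ℕ} (hm : 0 < m)
    {W Δ : ℕ → Matrix (Fin m) (Fin m) ℝ} {c ε r : ℝ} (hc : 1 ≤ c) (hε : 0 ≤ ε)
    (hW : ∀ a b, i ≤ a → a ≤ b → b < L → smax (midProd W a b) ≤ c * √m ^ (b + 1 - a))
    (hΔ : ∀ k, i ≤ k → k < L → frob (Δ k) ≤ r)
    (hsmall : ((L - i : ℕ) : ℝ) * (c * (c + ε) * r) ≤ ε * √m) {j : ℕ} (hj : j < L) :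
    smax (midProd (fun k => W k + Δ k) i j - midProd W i j) ≤ ε * √m ^ (j + 1 - i) := by
  have hB : ∀ a n, i ≤ a → a + n ≤ i + (L - i) → ‖descProd W a n‖ ≤ c * √m ^ n := by
    rintro a (_ | n) ha han
    · simpa [l2_opNorm_one hm] using hc
    · have := hW a (a + n) ha (by omega) (by omega)
      rwa [smax_eq_l2_opNorm, midProd_eq_descProd, show a + n + 1 - a = n + 1 by omega] at this
  have hAB : ∀ k, i ≤ k → k < i + (L - i) → ‖(W k + Δ k) - W k‖ ≤ r := fun k hk hkL => by
    rw [add_sub_cancel_left]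
    exact (l2_opNorm_le_frob _).trans (hΔ k hk (by omega))
  rw [smax_eq_l2_opNorm, midProd_eq_descProd, midProd_eq_descProd]
  exact norm_descProd_sub_descProd_le (A := fun k => W k + Δ k) hB hAB (Real.sqrt_nonneg _) hε
    hsmall _ (by omega)

end L2OpNorm

lemma rpow_div_two_eq_sqrt_pow {x : ℝ} (hx : 0 ≤ x) (n : ℕ) : x ^ ((n : ℝ) / 2) = √x ^ n := by
  rw [Real.sqrt_eq_rpow, ← Real.rpow_natCast, ← Real.rpow_mul hx]
  ring_nf

lemma perturbation_budget {K L R m : ℝ} (hK : 0 ≤ K) (hL : 0 ≤ L) (hR : 0 ≤ R)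
    (hm : (20 * K * (K + 0.05)) ^ 2 * L ^ 3 * R ^ 2 ≤ m) :
    L * (K * √L * (K * √L + 0.05 * √L) * R) ≤ 0.05 * √L * √m := by
  have hq : 20 * K * (K + 0.05) * L * √L * R ≤ √m := by
    refine (Real.le_sqrt (by positivity) ((by positivity : (0 : ℝ) ≤ _).trans hm)).mpr ?_
    calc (20 * K * (K + 0.05) * L * √L * R) ^ 2
        = (20 * K * (K + 0.05)) ^ 2 * L ^ 2 * √L ^ 2 * R ^ 2 := by ring
      _ = (20 * K * (K + 0.05)) ^ 2 * L ^ 3 * R ^ 2 := by rw [Real.sq_sqrt hL]; ring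
      _ ≤ m := hm
  calc L * (K * √L * (K * √L + 0.05 * √L) * R)
      = 0.05 * √L * (20 * K * (K + 0.05) * L * √L * R) := by ring
    _ ≤ 0.05 * √L * √m := by gcongr

/-- perturbation bound for products of middle layers. -/
theorem perturbation_middle_products :
    ∀ K : ℝ, 1 ≤ K → ∃ C > (0 : ℝ),
      ∀ (L m din dout : ℕ), 2 ≤ L → 1 ≤ m → 1 ≤ din → 1 ≤ dout → dout ≤ m →
      ∀ (W10 : Matrix (Fin m) (Fin din) ℝ) (Wmid0 : ℕ → Matrix (Fin m) (Fin m) ℝ)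
        (WL0 : Matrix (Fin dout) (Fin m) ℝ),
      (∀ a b : ℕ, 1 < a → a ≤ b → b < L →
        smax (midProd Wmid0 a b) ≤ K * Real.sqrt L * (m : ℝ) ^ (((b : ℝ) - a + 1) / 2)) →
      ∀ R : ℝ, 0 < R →
      ∀ (Δ1 : Matrix (Fin m) (Fin din) ℝ) (Δmid : ℕ → Matrix (Fin m) (Fin m) ℝ)
        (ΔL : Matrix (Fin dout) (Fin m) ℝ),
      frob Δ1 ≤ R → (∀ k, 2 ≤ k → k ≤ L - 1 → frob (Δmid k) ≤ R) → frob ΔL ≤ R →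
      (m : ℝ) ≥ C * L ^ 3 * R ^ 2 →
      ∀ i j : ℕ, 1 < i → i ≤ j → j < L →
        smax (midProd (fun k => Wmid0 k + Δmid k) i j - midProd Wmid0 i j) ≤
          0.05 * Real.sqrt L * (m : ℝ) ^ (((j : ℝ) - i + 1) / 2) := by
  intro K hK
  refine ⟨(20 * K * (K + 0.05)) ^ 2, by positivity, ?_⟩
  intro L m _ _ _ hm _ _ _ _ Wmid0 _ hW0 R hR _ Δmid _ _ hΔ _ hmC i j hi hij hj
  have hexp : ∀ a b : ℕ, a ≤ b + 1 →
      (m : ℝ) ^ (((b : ℝ) - a + 1) / 2) = √m ^ (b + 1 - a) := fun a b hab => by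
    rw [← rpow_div_two_eq_sqrt_pow m.cast_nonneg, Nat.cast_sub hab]
    push_cast
    ring_nf
  have hsmall : ((L - i : ℕ) : ℝ) * (K * √L * (K * √L + 0.05 * √L) * R) ≤ 0.05 * √L * √m :=
    le_trans (by gcongr; exact Nat.cast_le.mpr (Nat.sub_le L i))
      (perturbation_budget (by linarith) L.cast_nonneg hR.le (by linarith))
  rw [hexp i j (by omega)]
  refine smax_midProd_add_sub_midProd_le hm ?_ (by positivity) (fun a b ha hab hb => ?_)
    (fun k hk hkL => hΔ k (by omega) (by omega)) hsmall hj
  · exact one_le_mul_of_one_le_of_one_le hK (Real.one_le_sqrt.mpr (by exact_mod_cast (by omega)))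
  · rw [← hexp a b (by omega)]
    exact hW0 a b (by omega) hab hb
end
end

section
/- Let i ∈ {1,…,L} and suppose the weight matrices satisfy σ_max(W_{L:i+1}) ≤ (5/4)·m^{(L−i)/2} and σ_max(W_{i−1:1}·X) ≤ (5/4)·m^{(i−1)/2}·σ_max(X). Then the gradient of the loss with respect to W_i satisfies ‖∂ℓ/∂W_i‖_F ≤ 3·√(ℓ)·σ_max(X)/√(d_out), where ℓ denotes the loss value at (W_1, …, W_L). -/
open MeasureTheory ProbabilityTheory Matrix
open scoped BigOperators ENNReal

noncomputable section

/-- Scaling factor `1/√(m^{L-1} dout)`. -/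
def scal (L m dout : ℕ) : ℝ := 1 / Real.sqrt ((m : ℝ) ^ (L - 1) * dout)

/-- Network prediction `U = (1/√(m^{L-1} dout)) W_{L:1} X`. -/
def predU {m din dout n : ℕ} (L : ℕ) (X : Matrix (Fin din) (Fin n) ℝ)
    (W1 : Matrix (Fin m) (Fin din) ℝ) (Wmid : ℕ → Matrix (Fin m) (Fin m) ℝ)
    (WL : Matrix (Fin dout) (Fin m) ℝ) : Matrix (Fin dout) (Fin n) ℝ :=
  scal L m dout • (WL * midProd Wmid 2 (L - 1) * W1 * X)

/-- The ℓ² loss `ℓ = (1/2) ‖U - Y‖_F²`. -/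
def lossVal {m din dout n : ℕ} (L : ℕ) (X : Matrix (Fin din) (Fin n) ℝ)
    (Y : Matrix (Fin dout) (Fin n) ℝ) (W1 : Matrix (Fin m) (Fin din) ℝ)
    (Wmid : ℕ → Matrix (Fin m) (Fin m) ℝ) (WL : Matrix (Fin dout) (Fin m) ℝ) : ℝ :=
  (1 / 2) * frobSq (predU L X W1 Wmid WL - Y)

/-- Gradient of the loss w.r.t. the first-layer matrix `W_1`:
`(1/√(m^{L-1} dout)) W_{L:2}ᵀ (U - Y) Xᵀ`. -/
def grad1 {m din dout n : ℕ} (L : ℕ) (X : Matrix (Fin din) (Fin n) ℝ)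
    (Y : Matrix (Fin dout) (Fin n) ℝ) (W1 : Matrix (Fin m) (Fin din) ℝ)
    (Wmid : ℕ → Matrix (Fin m) (Fin m) ℝ) (WL : Matrix (Fin dout) (Fin m) ℝ) :
    Matrix (Fin m) (Fin din) ℝ :=
  scal L m dout • ((WL * midProd Wmid 2 (L - 1))ᵀ * (predU L X W1 Wmid WL - Y) * Xᵀ)

/-- Gradient of the loss w.r.t. the middle-layer matrix `W_k` (`2 ≤ k ≤ L-1`):
`(1/√(m^{L-1} dout)) W_{L:k+1}ᵀ (U - Y) (W_{k-1:1} X)ᵀ`. -/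
def gradMid {m din dout n : ℕ} (L k : ℕ) (X : Matrix (Fin din) (Fin n) ℝ)
    (Y : Matrix (Fin dout) (Fin n) ℝ) (W1 : Matrix (Fin m) (Fin din) ℝ)
    (Wmid : ℕ → Matrix (Fin m) (Fin m) ℝ) (WL : Matrix (Fin dout) (Fin m) ℝ) :
    Matrix (Fin m) (Fin m) ℝ :=
  scal L m dout • ((WL * midProd Wmid (k + 1) (L - 1))ᵀ * (predU L X W1 Wmid WL - Y) *
    (midProd Wmid 2 (k - 1) * W1 * X)ᵀ)

/-- Gradient of the loss w.r.t. the last-layer matrix `W_L`: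
`(1/√(m^{L-1} dout)) (U - Y) (W_{L-1:1} X)ᵀ`. -/
def gradLast {m din dout n : ℕ} (L : ℕ) (X : Matrix (Fin din) (Fin n) ℝ)
    (Y : Matrix (Fin dout) (Fin n) ℝ) (W1 : Matrix (Fin m) (Fin din) ℝ)
    (Wmid : ℕ → Matrix (Fin m) (Fin m) ℝ) (WL : Matrix (Fin dout) (Fin m) ℝ) :
    Matrix (Fin dout) (Fin m) ℝ :=
  scal L m dout • ((predU L X W1 Wmid WL - Y) * (midProd Wmid 2 (L - 1) * W1 * X)ᵀ)

/-- The `k`-th largest eigenvalue (1-indexed) of a real symmetric matrix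
(junk value `0` if the matrix is not symmetric). -/
def kthEig {N : Type*} [Fintype N] [DecidableEq N] (A : Matrix N N ℝ) (k : ℕ) : ℝ :=
  if h : A.IsHermitian then
    ((Finset.univ.val.map h.eigenvalues).sort (· ≤ ·)).getD (Fintype.card N - k) 0
  else 0

lemma enorm'_nonneg {a : ℕ} (v : Fin a → ℝ) : 0 ≤ enorm' v := Real.sqrt_nonneg _

lemma enorm'_sq {a : ℕ} (v : Fin a → ℝ) : enorm' v ^ 2 = ∑ i, v i ^ 2 :=
  Real.sq_sqrt (by positivity)

lemma frobSq_nonneg {a b : ℕ} (A : Matrix (Fin a) (Fin b) ℝ) : 0 ≤ frobSq A := by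
  unfold frobSq; positivity

lemma frob_nonneg {a b : ℕ} (A : Matrix (Fin a) (Fin b) ℝ) : 0 ≤ frob A := Real.sqrt_nonneg _

lemma frob_sq {a b : ℕ} (A : Matrix (Fin a) (Fin b) ℝ) : frob A ^ 2 = frobSq A :=
  Real.sq_sqrt (frobSq_nonneg A)

lemma smax_nonneg {a b : ℕ} (A : Matrix (Fin a) (Fin b) ℝ) : 0 ≤ smax A :=
  Real.iSup_nonneg fun v => enorm'_nonneg _

lemma dot_cs {a : ℕ} (v w : Fin a → ℝ) : v ⬝ᵥ w ≤ enorm' v * enorm' w := by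
  simpa [dotProduct, enorm'] using Real.sum_mul_le_sqrt_mul_sqrt Finset.univ v w

lemma mulVec_enorm_le_frob {a b : ℕ} (A : Matrix (Fin a) (Fin b) ℝ) (v : Fin b → ℝ) :
    enorm' (A.mulVec v) ≤ frob A * enorm' v := by
  have h : ∑ i, (A.mulVec v) i ^ 2 ≤ frobSq A * ∑ j, v j ^ 2 := by
    rw [frobSq, Finset.sum_mul]
    refine Finset.sum_le_sum fun i _ => ?_
    simpa [mulVec, dotProduct] using Finset.sum_mul_sq_le_sq_mul_sq Finset.univ (A i) v
  calc enorm' (A.mulVec v) ≤ Real.sqrt (frobSq A * ∑ j, v j ^ 2) :=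
        Real.sqrt_le_sqrt h
    _ = frob A * enorm' v := by rw [Real.sqrt_mul (frobSq_nonneg A)]; rfl

lemma smax_bdd {a b : ℕ} (A : Matrix (Fin a) (Fin b) ℝ) :
    BddAbove (Set.range fun v : {v : Fin b → ℝ // ∑ j, v j ^ 2 = 1} =>
      enorm' (A.mulVec v.1)) := by
  refine ⟨frob A, ?_⟩
  rintro x ⟨v, rfl⟩
  have := mulVec_enorm_le_frob A v.1
  have hv : enorm' v.1 = 1 := by rw [enorm', v.2, Real.sqrt_one]
  simpa [hv] using this

lemma mulVec_enorm_le {a b : ℕ} (A : Matrix (Fin a) (Fin b) ℝ)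
    (v : Fin b → ℝ) : enorm' (A.mulVec v) ≤ smax A * enorm' v := by
  by_cases h : ∑ j, v j ^ 2 = 0
  · have hv : v = 0 := by
      funext j
      have := (Finset.sum_eq_zero_iff_of_nonneg (fun i _ => sq_nonneg (v i))).1 h j
        (Finset.mem_univ j)
      exact pow_eq_zero_iff (by norm_num) |>.1 this
    simp [hv, enorm', Real.sqrt_eq_zero']
  · have hpos : 0 < ∑ j, v j ^ 2 := lt_of_le_of_ne (by positivity) (Ne.symm h)
    set c : ℝ := enorm' v with hc
    have hcpos : 0 < c := Real.sqrt_pos.2 hpos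
    set u : Fin b → ℝ := c⁻¹ • v with hu
    have hun : ∑ j, u j ^ 2 = 1 := by
      have hc2 : c ^ 2 = ∑ j, v j ^ 2 := enorm'_sq v
      simp only [hu, Pi.smul_apply, smul_eq_mul, mul_pow, ← Finset.mul_sum, ← hc2]
      field_simp
    have hle : enorm' (A.mulVec u) ≤ smax A :=
      le_ciSup (smax_bdd A) (⟨u, hun⟩ : {v : Fin b → ℝ // ∑ j, v j ^ 2 = 1})
    have hv : v = c • u := by
      rw [hu, smul_smul, mul_inv_cancel₀ (ne_of_gt hcpos), one_smul]
    have : enorm' (A.mulVec v) = c * enorm' (A.mulVec u) := by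
      rw [hv, Matrix.mulVec_smul, enorm']
      simp only [Pi.smul_apply, smul_eq_mul, mul_pow, ← Finset.mul_sum]
      rw [Real.sqrt_mul (sq_nonneg c), Real.sqrt_sq hcpos.le]; rfl
    rw [this]
    have : c * enorm' (A.mulVec u) ≤ c * smax A :=
      mul_le_mul_of_nonneg_left hle hcpos.le
    linarith [this]

lemma transpose_mulVec_enorm_le {a b : ℕ} (A : Matrix (Fin a) (Fin b) ℝ)
    (w : Fin a → ℝ) : enorm' (Aᵀ.mulVec w) ≤ smax A * enorm' w := by
  set z : Fin b → ℝ := Aᵀ.mulVec w with hz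
  have key : enorm' z ^ 2 ≤ (smax A * enorm' w) * enorm' z := by
    have h1 : enorm' z ^ 2 = z ⬝ᵥ z := by
      rw [enorm'_sq]; simp [dotProduct, sq]
    have h2 : z ⬝ᵥ z = w ⬝ᵥ A.mulVec z := by
      rw [hz, Matrix.mulVec_transpose, ← Matrix.dotProduct_mulVec]
    have h3 : w ⬝ᵥ A.mulVec z ≤ enorm' w * enorm' (A.mulVec z) := dot_cs _ _
    have h4 : enorm' (A.mulVec z) ≤ smax A * enorm' z := mulVec_enorm_le A z
    calc enorm' z ^ 2 = w ⬝ᵥ A.mulVec z := by rw [h1, h2]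
      _ ≤ enorm' w * enorm' (A.mulVec z) := h3
      _ ≤ enorm' w * (smax A * enorm' z) :=
        mul_le_mul_of_nonneg_left h4 (enorm'_nonneg w)
      _ = (smax A * enorm' w) * enorm' z := by ring
  by_cases hz0 : enorm' z = 0
  · rw [hz0]; exact mul_nonneg (smax_nonneg A) (enorm'_nonneg w)
  · have hzpos : 0 < enorm' z := lt_of_le_of_ne (enorm'_nonneg z) (Ne.symm hz0)
    nlinarith [key]

lemma frob_mul_le_of {a b c : ℕ} (A : Matrix (Fin a) (Fin b) ℝ) (s : ℝ) (hs : 0 ≤ s)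
    (h : ∀ v, enorm' (A.mulVec v) ≤ s * enorm' v) (B : Matrix (Fin b) (Fin c) ℝ) :
    frob (A * B) ≤ s * frob B := by
  have key : frobSq (A * B) ≤ s ^ 2 * frobSq B := by
    have hcol : ∀ j, ∑ i, (A * B) i j ^ 2 ≤ s ^ 2 * ∑ k, B k j ^ 2 := by
      intro j
      have h1 : (fun i => (A * B) i j) = A.mulVec (fun k => B k j) := by
        funext i; simp [Matrix.mul_apply, mulVec, dotProduct]
      have h2 := h (fun k => B k j)
      have h3 : enorm' (A.mulVec fun k => B k j) ^ 2 ≤ (s * enorm' fun k => B k j) ^ 2 := by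
        have := enorm'_nonneg (A.mulVec fun k => B k j)
        nlinarith [h2]
      rw [enorm'_sq, mul_pow, enorm'_sq] at h3
      calc ∑ i, (A * B) i j ^ 2 = ∑ i, (A.mulVec fun k => B k j) i ^ 2 :=
            Finset.sum_congr rfl fun i _ => by rw [congrFun h1 i]
        _ ≤ s ^ 2 * ∑ k, B k j ^ 2 := h3
    calc frobSq (A * B) = ∑ j, ∑ i, (A * B) i j ^ 2 := by rw [frobSq, Finset.sum_comm]
      _ ≤ ∑ j, s ^ 2 * ∑ k, B k j ^ 2 := Finset.sum_le_sum fun j _ => hcol j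
      _ = s ^ 2 * frobSq B := by
          rw [← Finset.mul_sum, frobSq, Finset.sum_comm]
  calc frob (A * B) ≤ Real.sqrt (s ^ 2 * frobSq B) := Real.sqrt_le_sqrt key
    _ = s * frob B := by
        rw [Real.sqrt_mul (sq_nonneg s), Real.sqrt_sq hs]; rfl

lemma frob_smax_mul_le {a b c : ℕ} (A : Matrix (Fin a) (Fin b) ℝ)
    (B : Matrix (Fin b) (Fin c) ℝ) : frob (A * B) ≤ smax A * frob B :=
  frob_mul_le_of A (smax A) (smax_nonneg A) (mulVec_enorm_le A) B

lemma frob_transpose_mul_le {a b c : ℕ} (A : Matrix (Fin a) (Fin b) ℝ)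
    (B : Matrix (Fin a) (Fin c) ℝ) : frob (Aᵀ * B) ≤ smax A * frob B :=
  frob_mul_le_of Aᵀ (smax A) (smax_nonneg A) (transpose_mulVec_enorm_le A) B

lemma frob_mul_transpose_le {a b c : ℕ} (B : Matrix (Fin a) (Fin b) ℝ)
    (C : Matrix (Fin c) (Fin b) ℝ) : frob (B * Cᵀ) ≤ frob B * smax C := by
  have key : frobSq (B * Cᵀ) ≤ frobSq B * smax C ^ 2 := by
    have hrow : ∀ i, ∑ j, (B * Cᵀ) i j ^ 2 ≤ smax C ^ 2 * ∑ k, B i k ^ 2 := by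
      intro i
      have h1 : (fun j => (B * Cᵀ) i j) = C.mulVec (B i) := by
        funext j; simp [Matrix.mul_apply, mulVec, dotProduct, transpose_apply, mul_comm]
      have h2 := mulVec_enorm_le C (B i)
      have h3 : enorm' (C.mulVec (B i)) ^ 2 ≤ (smax C * enorm' (B i)) ^ 2 := by
        have := enorm'_nonneg (C.mulVec (B i))
        nlinarith [h2]
      rw [enorm'_sq, mul_pow, enorm'_sq] at h3
      calc ∑ j, (B * Cᵀ) i j ^ 2 = ∑ j, (C.mulVec (B i)) j ^ 2 :=
            Finset.sum_congr rfl fun j _ => by rw [congrFun h1 j]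
        _ ≤ smax C ^ 2 * ∑ k, B i k ^ 2 := h3
    calc frobSq (B * Cᵀ) = ∑ i, ∑ j, (B * Cᵀ) i j ^ 2 := rfl
      _ ≤ ∑ i, smax C ^ 2 * ∑ k, B i k ^ 2 := Finset.sum_le_sum fun i _ => hrow i
      _ = frobSq B * smax C ^ 2 := by rw [← Finset.mul_sum, frobSq]; ring
  calc frob (B * Cᵀ) ≤ Real.sqrt (frobSq B * smax C ^ 2) := Real.sqrt_le_sqrt key
    _ = frob B * smax C := by
        rw [Real.sqrt_mul (frobSq_nonneg B), Real.sqrt_sq (smax_nonneg C)]; rfl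

lemma frob_smul {a b : ℕ} (s : ℝ) (A : Matrix (Fin a) (Fin b) ℝ) :
    frob (s • A) = |s| * frob A := by
  unfold frob frobSq
  simp only [Matrix.smul_apply, smul_eq_mul, mul_pow, ← Finset.mul_sum]
  rw [Real.sqrt_mul (sq_nonneg s), Real.sqrt_sq_eq_abs]

lemma frob_ABC_le {p q r n : ℕ} (A : Matrix (Fin p) (Fin q) ℝ)
    (E : Matrix (Fin p) (Fin n) ℝ) (C : Matrix (Fin r) (Fin n) ℝ) :
    frob (Aᵀ * E * Cᵀ) ≤ smax A * frob E * smax C :=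
  calc frob (Aᵀ * E * Cᵀ) ≤ frob (Aᵀ * E) * smax C := frob_mul_transpose_le _ _
    _ ≤ smax A * frob E * smax C :=
      mul_le_mul_of_nonneg_right (frob_transpose_mul_le A E) (smax_nonneg C)

lemma branch_core {p q r nn : ℕ} (A : Matrix (Fin p) (Fin q) ℝ)
    (E : Matrix (Fin p) (Fin nn) ℝ) (C : Matrix (Fin r) (Fin nn) ℝ)
    (s bA bC : ℝ) (hs : 0 ≤ s) (hA : smax A ≤ bA) (hC : smax C ≤ bC)
    (hbA : 0 ≤ bA) :
    frob (s • (Aᵀ * E * Cᵀ)) ≤ s * (bA * frob E * bC) := by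
  rw [frob_smul, abs_of_nonneg hs]
  refine mul_le_mul_of_nonneg_left ?_ hs
  refine (frob_ABC_le A E C).trans ?_
  exact mul_le_mul (mul_le_mul_of_nonneg_right hA (frob_nonneg E)) hC
    (smax_nonneg C) (mul_nonneg hbA (frob_nonneg E))

lemma branch_core_last {p r nn : ℕ}
    (E : Matrix (Fin p) (Fin nn) ℝ) (C : Matrix (Fin r) (Fin nn) ℝ)
    (s bC : ℝ) (hs : 0 ≤ s) (hC : smax C ≤ bC) :
    frob (s • (E * Cᵀ)) ≤ s * (frob E * bC) := by
  rw [frob_smul, abs_of_nonneg hs]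
  refine mul_le_mul_of_nonneg_left ?_ hs
  exact (frob_mul_transpose_le E C).trans
    (mul_le_mul_of_nonneg_left hC (frob_nonneg E))

lemma sqrt_two_le : Real.sqrt 2 ≤ 1.92 := by
  rw [show (1.92:ℝ) = Real.sqrt (1.92 ^ 2) from (Real.sqrt_sq (by norm_num)).symm]
  exact Real.sqrt_le_sqrt (by norm_num)

lemma conclude (c sl sX : ℝ) (d : ℕ) (hc3 : c * Real.sqrt 2 ≤ 3)
    (hl : 0 ≤ sl) (hX : 0 ≤ sX) :
    c * (Real.sqrt 2 * sl) * sX * (1 / Real.sqrt d) ≤ 3 * sl * sX / Real.sqrt d := by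
  rw [show 3 * sl * sX / Real.sqrt d = 3 * sl * sX * (1 / Real.sqrt d) by ring]
  have h1 : c * (Real.sqrt 2 * sl) * sX ≤ 3 * sl * sX := by
    nlinarith [mul_nonneg hl hX, mul_le_mul_of_nonneg_right hc3 (mul_nonneg hl hX)]
  exact mul_le_mul_of_nonneg_right h1 (one_div_nonneg.mpr (Real.sqrt_nonneg _))

lemma scal_key (L m dout : ℕ) (hL : 2 ≤ L) (hm : 1 ≤ m) (hdout : 1 ≤ dout) :
    scal L m dout * (m : ℝ) ^ (((L : ℝ) - 1) / 2) = 1 / Real.sqrt dout := by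
  have hm0 : (0:ℝ) < (m:ℝ) := by exact_mod_cast hm
  have hcast : (((L - 1 : ℕ)) : ℝ) = (L : ℝ) - 1 := by
    have : 1 ≤ L := by omega
    push_cast [this]; ring
  have hsq : Real.sqrt ((m:ℝ) ^ (L - 1)) = (m : ℝ) ^ (((L : ℝ) - 1) / 2) := by
    rw [← Real.rpow_natCast (m:ℝ) (L - 1), Real.sqrt_eq_rpow,
      ← Real.rpow_mul hm0.le, hcast]
    ring_nf
  have hpow : (0:ℝ) < (m : ℝ) ^ (((L : ℝ) - 1) / 2) := Real.rpow_pos_of_pos hm0 _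
  have hd : (0:ℝ) < Real.sqrt dout := Real.sqrt_pos.2 (by exact_mod_cast hdout)
  rw [scal, Real.sqrt_mul (by positivity), hsq]
  field_simp

/-- Frobenius norm bound on the gradient of the loss w.r.t. each layer. -/
theorem gradient_norm_bound
    (L m din dout n : ℕ) (hL : 2 ≤ L) (hm : 1 ≤ m) (hdin : 1 ≤ din) (hdout : 1 ≤ dout)
    (hn : 1 ≤ n) (hmdout : dout ≤ m)
    (X : Matrix (Fin din) (Fin n) ℝ) (Y : Matrix (Fin dout) (Fin n) ℝ)
    (W1 : Matrix (Fin m) (Fin din) ℝ) (Wmid : ℕ → Matrix (Fin m) (Fin m) ℝ)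
    (WL : Matrix (Fin dout) (Fin m) ℝ) :
    -- i = 1
    (smax (WL * midProd Wmid 2 (L - 1)) ≤ (5 / 4) * (m : ℝ) ^ (((L : ℝ) - 1) / 2) →
      frob (grad1 L X Y W1 Wmid WL) ≤
        3 * Real.sqrt (lossVal L X Y W1 Wmid WL) * smax X / Real.sqrt dout) ∧
    -- 2 ≤ i ≤ L - 1
    (∀ k : ℕ, 2 ≤ k → k ≤ L - 1 →
      smax (WL * midProd Wmid (k + 1) (L - 1)) ≤ (5 / 4) * (m : ℝ) ^ (((L : ℝ) - k) / 2) →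
      smax (midProd Wmid 2 (k - 1) * W1 * X) ≤
        (5 / 4) * (m : ℝ) ^ (((k : ℝ) - 1) / 2) * smax X →
      frob (gradMid L k X Y W1 Wmid WL) ≤
        3 * Real.sqrt (lossVal L X Y W1 Wmid WL) * smax X / Real.sqrt dout) ∧
    -- i = L
    (smax (midProd Wmid 2 (L - 1) * W1 * X) ≤
        (5 / 4) * (m : ℝ) ^ (((L : ℝ) - 1) / 2) * smax X →
      frob (gradLast L X Y W1 Wmid WL) ≤
        3 * Real.sqrt (lossVal L X Y W1 Wmid WL) * smax X / Real.sqrt dout) := by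
  have hm0 : (0:ℝ) < (m:ℝ) := by exact_mod_cast hm
  have hscal : 0 ≤ scal L m dout := by unfold scal; positivity
  have hloss : 0 ≤ lossVal L X Y W1 Wmid WL := by
    have := frobSq_nonneg (predU L X W1 Wmid WL - Y)
    unfold lossVal; linarith
  have hfE : frob (predU L X W1 Wmid WL - Y) =
      Real.sqrt 2 * Real.sqrt (lossVal L X Y W1 Wmid WL) := by
    have h2 : frobSq (predU L X W1 Wmid WL - Y) = 2 * lossVal L X Y W1 Wmid WL := by
      unfold lossVal; ring
    rw [frob, h2, Real.sqrt_mul (by norm_num)]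
  have hkey := scal_key L m dout hL hm hdout
  have hsl := Real.sqrt_nonneg (lossVal L X Y W1 Wmid WL)
  have hsX := smax_nonneg X
  refine ⟨?_, ?_, ?_⟩
  · intro hA
    have hb := branch_core (WL * midProd Wmid 2 (L - 1)) (predU L X W1 Wmid WL - Y) X
      (scal L m dout) ((5/4) * (m:ℝ) ^ (((L:ℝ)-1)/2)) (smax X) hscal hA le_rfl
      (by positivity)
    calc frob (grad1 L X Y W1 Wmid WL)
        ≤ scal L m dout * ((5/4) * (m:ℝ) ^ (((L:ℝ)-1)/2) *
            frob (predU L X W1 Wmid WL - Y) * smax X) := hb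
      _ = (5/4) * frob (predU L X W1 Wmid WL - Y) * smax X *
            (scal L m dout * (m:ℝ) ^ (((L:ℝ)-1)/2)) := by ring
      _ = (5/4) * (Real.sqrt 2 * Real.sqrt (lossVal L X Y W1 Wmid WL)) * smax X *
            (1 / Real.sqrt dout) := by rw [hfE, hkey]
      _ ≤ 3 * Real.sqrt (lossVal L X Y W1 Wmid WL) * smax X / Real.sqrt dout :=
          conclude _ _ _ _ (by nlinarith [sqrt_two_le, Real.sqrt_nonneg 2]) hsl hsX
  · intro k hk2 hkL hA hC
    have hMM : (m:ℝ) ^ (((L:ℝ)-(k:ℝ))/2) * (m:ℝ) ^ (((k:ℝ)-1)/2)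
        = (m:ℝ) ^ (((L:ℝ)-1)/2) := by
      rw [← Real.rpow_add hm0]; congr 1; ring
    have hb := branch_core (WL * midProd Wmid (k + 1) (L - 1)) (predU L X W1 Wmid WL - Y)
      (midProd Wmid 2 (k - 1) * W1 * X) (scal L m dout)
      ((5/4) * (m:ℝ) ^ (((L:ℝ)-(k:ℝ))/2)) ((5/4) * (m:ℝ) ^ (((k:ℝ)-1)/2) * smax X)
      hscal hA hC (by positivity)
    calc frob (gradMid L k X Y W1 Wmid WL)
        ≤ scal L m dout * ((5/4) * (m:ℝ) ^ (((L:ℝ)-(k:ℝ))/2) *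
            frob (predU L X W1 Wmid WL - Y) *
            ((5/4) * (m:ℝ) ^ (((k:ℝ)-1)/2) * smax X)) := hb
      _ = (25/16) * frob (predU L X W1 Wmid WL - Y) * smax X *
            (scal L m dout * ((m:ℝ) ^ (((L:ℝ)-(k:ℝ))/2) * (m:ℝ) ^ (((k:ℝ)-1)/2))) := by
          ring
      _ = (25/16) * frob (predU L X W1 Wmid WL - Y) * smax X *
            (scal L m dout * (m:ℝ) ^ (((L:ℝ)-1)/2)) := by rw [hMM]
      _ = (25/16) * (Real.sqrt 2 * Real.sqrt (lossVal L X Y W1 Wmid WL)) * smax X *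
            (1 / Real.sqrt dout) := by rw [hfE, hkey]
      _ ≤ 3 * Real.sqrt (lossVal L X Y W1 Wmid WL) * smax X / Real.sqrt dout :=
          conclude _ _ _ _ (by nlinarith [sqrt_two_le, Real.sqrt_nonneg 2]) hsl hsX
  · intro hC
    have hb := branch_core_last (predU L X W1 Wmid WL - Y)
      (midProd Wmid 2 (L - 1) * W1 * X) (scal L m dout)
      ((5/4) * (m:ℝ) ^ (((L:ℝ)-1)/2) * smax X) hscal hC
    calc frob (gradLast L X Y W1 Wmid WL)
        ≤ scal L m dout * (frob (predU L X W1 Wmid WL - Y) *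
            ((5/4) * (m:ℝ) ^ (((L:ℝ)-1)/2) * smax X)) := hb
      _ = (5/4) * frob (predU L X W1 Wmid WL - Y) * smax X *
            (scal L m dout * (m:ℝ) ^ (((L:ℝ)-1)/2)) := by ring
      _ = (5/4) * (Real.sqrt 2 * Real.sqrt (lossVal L X Y W1 Wmid WL)) * smax X *
            (1 / Real.sqrt dout) := by rw [hfE, hkey]
      _ ≤ 3 * Real.sqrt (lossVal L X Y W1 Wmid WL) * smax X / Real.sqrt dout :=
          conclude _ _ _ _ (by nlinarith [sqrt_two_le, Real.sqrt_nonneg 2]) hsl hsX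
end
end
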